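/- arXiv:1301.2831 — 2 statements merged into one kernel-verified Lean document; each statement's English description precedes it below -/
import Mathlib

section
/- Let U and V⊥ be closed subspaces of H with dim(U) = dim(V⊥) = n < ∞ and cos(θ_{U,V⊥}) > 0. Then cos(θ_{V⊥,U}) ≥ cos(θ_{U,V⊥}) > 0. -/
/-!
Since `cos θ_{U,W} ‖u‖ ≤ ‖Q_W u‖` on `U`, a positive cosine makes `Q_W : U → W` injective, hence
bijective when `dim U = dim W < ∞`. Every `w ∈ W` is then `Q_W u` for some `u ∈ U`, and
`‖w‖² = ⟪w, u⟫ = ⟪Q_U w, u⟫ ≤ ‖Q_U w‖ ‖u‖ ≤ ‖Q_U w‖ ‖w‖ / cos θ_{U,W}`,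
so `cos θ_{U,W} ‖w‖ ≤ ‖Q_U w‖`.
-/

open Submodule

variable {H : Type*}

/-- The cosine of the subspace angle `θ_{U,W}` between subspaces `U` and `W`:
`cos θ_{U,W} = inf_{u ∈ U, ‖u‖ = 1} ‖Q_W u‖`. -/
noncomputable def cosAngle [NormedAddCommGroup H] [InnerProductSpace ℂ H]
    (U W : Submodule ℂ H) [HasOrthogonalProjection W] : ℝ :=
  sInf {r : ℝ | ∃ u ∈ U, ‖u‖ = 1 ∧ r = ‖(orthogonalProjection W u : H)‖}

section CosAngle

variable [NormedAddCommGroup H] [InnerProductSpace ℂ H] {U W : Submodule ℂ H}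

theorem cosAngle_nonneg [HasOrthogonalProjection W] : 0 ≤ cosAngle U W :=
  Real.sInf_nonneg (by rintro r ⟨u, -, -, rfl⟩; positivity)

theorem cosAngle_mul_norm_le [HasOrthogonalProjection W] {u : H} (hu : u ∈ U) :
    cosAngle U W * ‖u‖ ≤ ‖(orthogonalProjectionOnto W u : H)‖ := by
  rcases eq_or_ne u 0 with rfl | hne
  · simp
  have hpos : 0 < ‖u‖ := norm_pos_iff.mpr hne
  have hle : cosAngle U W ≤ ‖(orthogonalProjectionOnto W ((‖u‖⁻¹ : ℂ) • u) : H)‖ :=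
    csInf_le ⟨0, by rintro r ⟨v, -, -, rfl⟩; positivity⟩
      ⟨_, U.smul_mem _ hu, norm_smul_inv_norm hne, rfl⟩
  rw [map_smul, coe_smul, norm_smul, norm_inv, Complex.norm_real, norm_norm,
    le_inv_mul_iff₀ hpos] at hle
  rwa [mul_comm]

theorem le_cosAngle [HasOrthogonalProjection W] (hU : U ≠ ⊥) {c : ℝ}
    (h : ∀ u ∈ U, ‖u‖ = 1 → c ≤ ‖(orthogonalProjectionOnto W u : H)‖) : c ≤ cosAngle U W := by
  obtain ⟨u, hu, hne⟩ := exists_mem_ne_zero_of_ne_bot hU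
  refine le_csInf ⟨_, _, U.smul_mem _ hu, norm_smul_inv_norm (𝕜 := ℂ) hne, rfl⟩ ?_
  rintro r ⟨v, hv, hv1, rfl⟩
  exact h v hv hv1

theorem ne_bot_of_cosAngle_pos [HasOrthogonalProjection W] (h : 0 < cosAngle U W) : U ≠ ⊥ := by
  rintro rfl
  simp [cosAngle] at h

theorem injective_orthogonalProjectionOnto_comp_subtype [HasOrthogonalProjection W]
    (h : 0 < cosAngle U W) :
    Function.Injective ((orthogonalProjectionOnto W).toLinearMap ∘ₗ U.subtype) := by
  refine (injective_iff_map_eq_zero _).mpr fun u hu => ?_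
  have hle := cosAngle_mul_norm_le (W := W) u.2
  simp only [LinearMap.comp_apply] at hu
  rw [show orthogonalProjectionOnto W (u : H) = 0 from hu, ZeroMemClass.coe_zero, norm_zero] at hle
  exact norm_eq_zero.mp (le_antisymm (nonpos_of_mul_nonpos_right hle h) (norm_nonneg _))

theorem cosAngle_mul_norm_orthogonalProjectionOnto_le [HasOrthogonalProjection U]
    [HasOrthogonalProjection W] {u : H} (hu : u ∈ U) :
    cosAngle U W * ‖(orthogonalProjectionOnto W u : H)‖ ≤
      ‖(orthogonalProjectionOnto U (orthogonalProjectionOnto W u : H) : H)‖ := by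
  set w : H := ↑(orthogonalProjectionOnto W u)
  set c := cosAngle U W
  rcases eq_or_ne w 0 with hw | hw
  · simp [hw]
  have hre : RCLike.re (inner ℂ w u) = ‖w‖ ^ 2 := W.re_inner_starProjection_eq_normSq u
  have hsym : inner ℂ w u = inner ℂ (orthogonalProjectionOnto U w : H) u := by
    rw [← starProjection_apply, inner_starProjection_left_eq_right,
      starProjection_eq_self_iff.mpr hu]
  have hsq : ‖w‖ ^ 2 ≤ ‖(orthogonalProjectionOnto U w : H)‖ * ‖u‖ := by
    rw [← hre, hsym]
    exact re_inner_le_norm _ _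
  have hc : c * ‖u‖ ≤ ‖w‖ := cosAngle_mul_norm_le hu
  refine le_of_mul_le_mul_right ?_ (norm_pos_iff.mpr hw)
  calc c * ‖w‖ * ‖w‖ = c * ‖w‖ ^ 2 := by ring
    _ ≤ c * (‖(orthogonalProjectionOnto U w : H)‖ * ‖u‖) :=
        mul_le_mul_of_nonneg_left hsq cosAngle_nonneg
    _ = ‖(orthogonalProjectionOnto U w : H)‖ * (c * ‖u‖) := by ring
    _ ≤ ‖(orthogonalProjectionOnto U w : H)‖ * ‖w‖ := by gcongr

end CosAngle

theorem stmt4_general [NormedAddCommGroup H] [InnerProductSpace ℂ H]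
    (U V : Submodule ℂ H)
    [HasOrthogonalProjection U] [HasOrthogonalProjection Vᗮ]
    [FiniteDimensional ℂ U] [FiniteDimensional ℂ Vᗮ] (n : ℕ)
    (hdimU : Module.finrank ℂ U = n) (hdimV : Module.finrank ℂ Vᗮ = n)
    (hangle : 0 < cosAngle U Vᗮ) :
    cosAngle U Vᗮ ≤ cosAngle Vᗮ U ∧ 0 < cosAngle Vᗮ U := by
  have hdim : Module.finrank ℂ U = Module.finrank ℂ Vᗮ := hdimU.trans hdimV.symm
  have hsurj := (LinearMap.injective_iff_surjective_of_finrank_eq_finrank hdim).mp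
    (injective_orthogonalProjectionOnto_comp_subtype hangle)
  have hV : Vᗮ ≠ ⊥ := by
    rw [Ne, ← finrank_eq_zero, ← hdim, finrank_eq_zero]
    exact ne_bot_of_cosAngle_pos hangle
  have hle : cosAngle U Vᗮ ≤ cosAngle Vᗮ U := by
    refine le_cosAngle hV fun w hw hw1 => ?_
    obtain ⟨u, hu⟩ := hsurj ⟨w, hw⟩
    have h := cosAngle_mul_norm_orthogonalProjectionOnto_le (W := Vᗮ) u.2
    rwa [show (orthogonalProjectionOnto Vᗮ (u : H) : H) = w from congrArg Subtype.val hu, hw1,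
      mul_one] at h
  exact ⟨hle, hangle.trans_le hle⟩

/-- if `dim U = dim Vᗮ = n < ∞` and `cos θ_{U,Vᗮ} > 0`, then
`cos θ_{Vᗮ,U} ≥ cos θ_{U,Vᗮ} > 0`. -/
theorem stmt4 [NormedAddCommGroup H] [InnerProductSpace ℂ H] [CompleteSpace H]
    (U V : Submodule ℂ H) (hU : IsClosed (U : Set H)) (hV : IsClosed (V : Set H))
    [HasOrthogonalProjection U] [HasOrthogonalProjection Vᗮ]
    [FiniteDimensional ℂ U] [FiniteDimensional ℂ Vᗮ] (n : ℕ)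
    (hdimU : Module.finrank ℂ U = n) (hdimV : Module.finrank ℂ Vᗮ = n)
    (hangle : 0 < cosAngle U Vᗮ) :
    cosAngle U Vᗮ ≤ cosAngle Vᗮ U ∧ 0 < cosAngle Vᗮ U :=
  stmt4_general U V n hdimU hdimV hangle
end

section
/- Let F_{n,m} : H → T_n be the generalized sampling map (the oblique projection onto T_n along (P_m(T_n))⊥, assuming cos(θ_{n,m})>0). Then its condition number κ(F_{n,m}) := sup_{f∈H, f̂^{[m]}≠0} ‖F_{n,m}(f)‖ / ‖f̂^{[m]}‖_{ℓ²} equals D_{n,m} = (inf_{φ∈T_n,‖φ‖=1}⟨P_mφ,φ⟩)^{-1/2}, where f̂^{[m]} = (⟨f,ψ_j⟩)_{j=1}^m. -/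
open Submodule
open scoped InnerProductSpace

variable {H : Type*}

/-- The truncated frame operator `P_m g = Σ_{j=1}^m ⟨g,ψ_j⟩ψ_j`. -/
noncomputable def framePm [NormedAddCommGroup H] [InnerProductSpace ℂ H] {m : ℕ}
    (ψ : Fin m → H) : H →L[ℂ] H :=
  ∑ j, ((innerSL ℂ (ψ j)).smulRight (ψ j))

/-- The generalized sampling constant
`D_{n,m} = (inf_{φ ∈ T_n, ‖φ‖=1} ⟨P_m φ, φ⟩)^{-1/2}`, using
`⟨P_m φ, φ⟩ = Σ_{j=1}^m |⟨φ,ψ_j⟩|²`. -/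
noncomputable def Dconst [NormedAddCommGroup H] [InnerProductSpace ℂ H] {m : ℕ}
    (ψ : Fin m → H) (T : Submodule ℂ H) : ℝ :=
  (Real.sqrt (sInf {r : ℝ | ∃ φ ∈ T, ‖φ‖ = 1 ∧ r = ∑ j, ‖⟪ψ j, φ⟫_ℂ‖ ^ 2}))⁻¹

/-! With `S f = (⟪ψ j, f⟫)_j ∈ ℓ²` one has `⟪P_m f, g⟫ = ⟪S f, S g⟫`, so the defining property of
`F f` says that `S (F f)` is the orthogonal projection of `S f` onto `S(T)`; hence
`‖S (F f)‖ ≤ ‖S f‖`. If `c` is the infimum of `‖S φ‖²` over unit vectors `φ ∈ T`, homogeneity gives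
`c ‖u‖² ≤ ‖S u‖²` on `T`, so `‖F f‖ ≤ c^{-1/2} ‖S f‖`. Conversely, `c > 0` makes `S` injective on
`T`, so `F` fixes `T`, and a unit vector `φ ∈ T` attains the ratio `‖S φ‖⁻¹`; the supremum of these
is `c^{-1/2}`. -/

theorem norm_le_of_inner_sub_self_eq_zero {𝕜 F : Type*} [RCLike 𝕜] [NormedAddCommGroup F]
    [InnerProductSpace 𝕜 F] {a b : F} (h : ⟪a - b, a⟫_𝕜 = 0) : ‖a‖ ≤ ‖b‖ := by
  have hpyth := norm_add_sq_eq_norm_sq_add_norm_sq_of_inner_eq_zero (𝕜 := 𝕜) (b - a) a (by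
    rw [← neg_sub, inner_neg_left, h, neg_zero])
  rw [sub_add_cancel] at hpyth
  exact mul_self_le_mul_self_iff (norm_nonneg a) (norm_nonneg b) |>.mpr
    (hpyth ▸ le_add_of_nonneg_left (mul_self_nonneg _))

theorem inv_sqrt_sInf_le {s : Set ℝ} {b : ℝ} (hs : s.Nonempty) (hbdd : BddBelow s)
    (hpos : 0 < sInf s) (hb : ∀ r ∈ s, (√r)⁻¹ ≤ b) : (√(sInf s))⁻¹ ≤ b := by
  have hr : ∀ r ∈ s, 0 < r := fun r hr => hpos.trans_le (csInf_le hbdd hr)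
  obtain ⟨r₀, hr₀⟩ := hs
  have hb0 : 0 < b := (inv_pos.2 (Real.sqrt_pos.2 (hr r₀ hr₀))).trans_le (hb r₀ hr₀)
  rw [inv_le_comm₀ (Real.sqrt_pos.2 hpos) hb0, Real.le_sqrt' (inv_pos.2 hb0)]
  refine le_csInf ⟨r₀, hr₀⟩ fun r hr' => ?_
  have := hb r hr'
  rwa [inv_le_comm₀ (Real.sqrt_pos.2 (hr r hr')) hb0, Real.le_sqrt' (inv_pos.2 hb0)] at this

section LowerBound

variable {𝕜 E F : Type*} [RCLike 𝕜] [NormedAddCommGroup E] [InnerProductSpace 𝕜 E]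
  [NormedAddCommGroup F] [InnerProductSpace 𝕜 F]

noncomputable def lowerBoundOn (S : E →ₗ[𝕜] F) (T : Submodule 𝕜 E) : ℝ :=
  sInf {r : ℝ | ∃ φ ∈ T, ‖φ‖ = 1 ∧ r = ‖S φ‖ ^ 2}

variable {S : E →ₗ[𝕜] F} {T : Submodule 𝕜 E}

theorem bddBelow_lowerBoundOn_set :
    BddBelow {r : ℝ | ∃ φ ∈ T, ‖φ‖ = 1 ∧ r = ‖S φ‖ ^ 2} :=
  ⟨0, by rintro r ⟨φ, -, -, rfl⟩; positivity⟩

theorem lowerBoundOn_mul_norm_sq_le {u : E} (hu : u ∈ T) :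
    lowerBoundOn S T * ‖u‖ ^ 2 ≤ ‖S u‖ ^ 2 := by
  rcases eq_or_ne u 0 with rfl | hu0
  · simp
  have hnu : 0 < ‖u‖ := norm_pos_iff.mpr hu0
  have hscale : ‖S ((‖u‖⁻¹ : 𝕜) • u)‖ = ‖u‖⁻¹ * ‖S u‖ := by
    rw [map_smul, norm_smul, norm_inv, RCLike.norm_ofReal, abs_of_pos hnu]
  have hunit : ‖(‖u‖⁻¹ : 𝕜) • u‖ = 1 := by
    rw [norm_smul, norm_inv, RCLike.norm_ofReal, abs_of_pos hnu, inv_mul_cancel₀ hnu.ne']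
  have hle : lowerBoundOn S T ≤ (‖u‖⁻¹ * ‖S u‖) ^ 2 :=
    csInf_le bddBelow_lowerBoundOn_set ⟨_, T.smul_mem _ hu, hunit, by rw [hscale]⟩
  calc lowerBoundOn S T * ‖u‖ ^ 2 ≤ (‖u‖⁻¹ * ‖S u‖) ^ 2 * ‖u‖ ^ 2 := by gcongr
    _ = ‖S u‖ ^ 2 := by field_simp

theorem eq_of_inner_map_sub_eq_zero (hc : 0 < lowerBoundOn S T) {u v : E} (hu : u ∈ T)
    (hv : v ∈ T) (horth : ∀ φ ∈ T, ⟪S u - S v, S φ⟫_𝕜 = 0) : u = v := by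
  have hS : S (u - v) = 0 := by
    have := horth _ (T.sub_mem hu hv)
    rwa [← map_sub, inner_self_eq_zero] at this
  have h := lowerBoundOn_mul_norm_sq_le (S := S) (T.sub_mem hu hv)
  rw [hS, norm_zero, zero_pow two_ne_zero] at h
  have : ‖u - v‖ ^ 2 = 0 := le_antisymm (nonpos_of_mul_nonpos_right h hc) (sq_nonneg _)
  rwa [pow_eq_zero_iff two_ne_zero, norm_eq_zero, sub_eq_zero] at this

theorem norm_le_inv_sqrt_lowerBoundOn_mul (hc : 0 < lowerBoundOn S T) {u f : E} (hu : u ∈ T)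
    (horth : ∀ φ ∈ T, ⟪S u - S f, S φ⟫_𝕜 = 0) : ‖u‖ ≤ (√(lowerBoundOn S T))⁻¹ * ‖S f‖ := by
  have hsqrt : 0 < √(lowerBoundOn S T) := Real.sqrt_pos.2 hc
  have hSu : ‖S u‖ ≤ ‖S f‖ := norm_le_of_inner_sub_self_eq_zero (horth u hu)
  have hsq : (√(lowerBoundOn S T) * ‖u‖) ^ 2 ≤ ‖S f‖ ^ 2 := by
    rw [mul_pow, Real.sq_sqrt hc.le]
    exact (lowerBoundOn_mul_norm_sq_le hu).trans (by gcongr)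
  rw [← div_eq_inv_mul, le_div_iff₀' hsqrt]
  exact le_of_sq_le_sq hsq (norm_nonneg _)

theorem isLUB_norm_div_norm_map (hc : 0 < lowerBoundOn S T) {G : E → E}
    (hGT : ∀ f, G f ∈ T) (hG : ∀ f, ∀ φ ∈ T, ⟪S (G f) - S f, S φ⟫_𝕜 = 0) :
    IsLUB {r : ℝ | ∃ f, S f ≠ 0 ∧ r = ‖G f‖ / ‖S f‖} (√(lowerBoundOn S T))⁻¹ := by
  refine ⟨?_, fun b hb => ?_⟩
  · rintro r ⟨f, hf, rfl⟩
    rw [div_le_iff₀ (norm_pos_iff.2 hf)]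
    exact norm_le_inv_sqrt_lowerBoundOn_mul hc (hGT f) (hG f)
  have hne : {r : ℝ | ∃ φ ∈ T, ‖φ‖ = 1 ∧ r = ‖S φ‖ ^ 2}.Nonempty := by
    by_contra h
    rw [Set.not_nonempty_iff_eq_empty] at h
    simp [lowerBoundOn, h] at hc
  refine inv_sqrt_sInf_le hne bddBelow_lowerBoundOn_set hc ?_
  rintro r ⟨φ, hφT, hφ1, rfl⟩
  have hGφ : G φ = φ := eq_of_inner_map_sub_eq_zero hc (hGT φ) hφT (hG φ)
  have hSφ : S φ ≠ 0 := by
    intro h0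
    have := lowerBoundOn_mul_norm_sq_le (S := S) hφT
    rw [h0, hφ1, norm_zero, one_pow, mul_one, zero_pow two_ne_zero] at this
    exact hc.not_ge this
  apply hb
  exact ⟨φ, hSφ, by rw [hGφ, hφ1, Real.sqrt_sq (norm_nonneg _), one_div]⟩

end LowerBound

section Sampling
variable {𝕜 E ι : Type*} [RCLike 𝕜] [NormedAddCommGroup E] [InnerProductSpace 𝕜 E]

variable (𝕜) in
noncomputable def sampling (ψ : ι → E) : E →ₗ[𝕜] EuclideanSpace 𝕜 ι :=
  (WithLp.linearEquiv 2 𝕜 (ι → 𝕜)).symm.toLinearMap ∘ₗ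
    LinearMap.pi fun j => (innerSL 𝕜 (ψ j) : E →L[𝕜] 𝕜).toLinearMap

@[simp]
theorem sampling_apply (ψ : ι → E) (f : E) (j : ι) : sampling 𝕜 ψ f j = ⟪ψ j, f⟫_𝕜 := rfl

theorem norm_sampling_sq [Fintype ι] (ψ : ι → E) (f : E) :
    ‖sampling 𝕜 ψ f‖ ^ 2 = ∑ j, ‖⟪ψ j, f⟫_𝕜‖ ^ 2 := by
  simp [EuclideanSpace.norm_sq_eq]

end Sampling

theorem inner_framePm {m : ℕ} [NormedAddCommGroup H] [InnerProductSpace ℂ H] (ψ : Fin m → H)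
    (f g : H) : ⟪framePm ψ f, g⟫_ℂ = ⟪sampling ℂ ψ f, sampling ℂ ψ g⟫_ℂ := by
  simp [framePm, PiLp.inner_apply]

theorem stmt11_general [NormedAddCommGroup H] [InnerProductSpace ℂ H]
    {m : ℕ} (ψ : Fin m → H) (T : Submodule ℂ H)
    (hD : 0 < sInf {r : ℝ | ∃ φ ∈ T, ‖φ‖ = 1 ∧ r = ∑ j, ‖⟪ψ j, φ⟫_ℂ‖ ^ 2})
    (F : H → H)
    (hF : ∀ f : H, F f ∈ T ∧
      ∀ φ ∈ T, ⟪framePm ψ (F f), φ⟫_ℂ = ⟪framePm ψ f, φ⟫_ℂ) :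
    IsLUB {r : ℝ | ∃ f : H, (∑ j, ‖⟪ψ j, f⟫_ℂ‖ ^ 2) ≠ 0 ∧
      r = ‖F f‖ / Real.sqrt (∑ j, ‖⟪ψ j, f⟫_ℂ‖ ^ 2)} (Dconst ψ T) := by
  have hbound : lowerBoundOn (sampling ℂ ψ) T =
      sInf {r : ℝ | ∃ φ ∈ T, ‖φ‖ = 1 ∧ r = ∑ j, ‖⟪ψ j, φ⟫_ℂ‖ ^ 2} := by
    simp only [lowerBoundOn, norm_sampling_sq]
  have hset : {r : ℝ | ∃ f : H, (∑ j, ‖⟪ψ j, f⟫_ℂ‖ ^ 2) ≠ 0 ∧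
      r = ‖F f‖ / Real.sqrt (∑ j, ‖⟪ψ j, f⟫_ℂ‖ ^ 2)} =
      {r : ℝ | ∃ f, sampling ℂ ψ f ≠ 0 ∧ r = ‖F f‖ / ‖sampling ℂ ψ f‖} := by
    simp only [← norm_sampling_sq, Real.sqrt_sq (norm_nonneg _), ne_eq, pow_eq_zero_iff two_ne_zero,
      norm_eq_zero]
  rw [hset, Dconst, ← hbound]
  refine isLUB_norm_div_norm_map (hbound ▸ hD) (fun f => (hF f).1) fun f φ hφ => ?_
  rw [inner_sub_left, ← inner_framePm, ← inner_framePm, (hF f).2 φ hφ, sub_self]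

/-- the condition number of generalized sampling
`κ(F_{n,m}) = sup_{f, f̂^{[m]} ≠ 0} ‖F_{n,m}(f)‖/‖f̂^{[m]}‖_{ℓ²}` equals
`D_{n,m} = (inf_{φ∈T_n,‖φ‖=1}⟨P_mφ,φ⟩)^{-1/2}`. -/
theorem stmt11 [NormedAddCommGroup H] [InnerProductSpace ℂ H] [CompleteSpace H]
    {m : ℕ} (ψ : Fin m → H) (T : Submodule ℂ H) [FiniteDimensional ℂ T]
    (hD : 0 < sInf {r : ℝ | ∃ φ ∈ T, ‖φ‖ = 1 ∧ r = ∑ j, ‖⟪ψ j, φ⟫_ℂ‖ ^ 2})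
    (F : H → H)
    (hF : ∀ f : H, F f ∈ T ∧
      ∀ φ ∈ T, ⟪framePm ψ (F f), φ⟫_ℂ = ⟪framePm ψ f, φ⟫_ℂ) :
    IsLUB {r : ℝ | ∃ f : H, (∑ j, ‖⟪ψ j, f⟫_ℂ‖ ^ 2) ≠ 0 ∧
      r = ‖F f‖ / Real.sqrt (∑ j, ‖⟪ψ j, f⟫_ℂ‖ ^ 2)} (Dconst ψ T) :=
  stmt11_general ψ T hD F hF
end
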